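/- The infinite series ∑_{n=1}^∞ H_n H_{n+1} / (n+1)² equals 3ζ(4). -/

import Mathlib

open Finset

/-- Generalized harmonic number `H_n^{(r)} = ∑_{j=1}^n 1/j^r`. -/
noncomputable def H (n r : ℕ) : ℝ := ∑ j ∈ Finset.range n, (1 : ℝ) / (j + 1) ^ r

/-- Riemann zeta value `ζ(s) = ∑_{n=1}^∞ 1/n^s` (as a real series). -/
noncomputable def Z (s : ℕ) : ℝ := ∑' n : ℕ, (1 : ℝ) / (n + 1) ^ s

/-- Double zeta value `ζ(a,b) = ∑_{m>n≥1} 1/(m^a n^b)`. -/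
noncomputable def Z2 (a b : ℕ) : ℝ :=
  ∑' m : ℕ, (∑ j ∈ Finset.range m, (1 : ℝ) / (j + 1) ^ b) / (m + 1) ^ a

lemma H_two_eq (n : ℕ) : H n 2 = ∑ j ∈ Finset.range n, (1 : ℝ) / (j + 1) ^ 2 := by
  simp [H]


lemma H_succ (n r : ℕ) : H (n + 1) r = H n r + 1 / ((n : ℝ) + 1) ^ r := by
  simp [H, Finset.sum_range_succ]

lemma H_zero (r : ℕ) : H 0 r = 0 := by simp [H]

lemma H_nonneg (n r : ℕ) : 0 ≤ H n r := by
  apply Finset.sum_nonneg; intro j _; positivity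

lemma H_one_eq (n : ℕ) : H n 1 = ∑ j ∈ Finset.range n, (1 : ℝ) / (j + 1) := by
  simp [H]

lemma H_mono {m n : ℕ} (h : m ≤ n) (r : ℕ) : H m r ≤ H n r := by
  apply Finset.sum_le_sum_of_subset_of_nonneg (Finset.range_subset_range.mpr h)
  intro j _ _; positivity

lemma H_le (n : ℕ) : H n 1 ≤ n := by
  calc H n 1 ≤ ∑ j ∈ Finset.range n, (1 : ℝ) := by
        apply Finset.sum_le_sum; intro j _
        rw [pow_one, div_le_one (by positivity)]
        have : (0:ℝ) ≤ (j:ℝ) := Nat.cast_nonneg j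
        linarith
    _ = n := by simp

lemma H2_le' (n : ℕ) : H (n + 1) 2 ≤ 2 - 1 / ((n : ℝ) + 1) := by
  induction n with
  | zero => simp [H, H_succ]; norm_num
  | succ k ih =>
    rw [H_succ]
    have h1 : (0:ℝ) < (k:ℝ) + 1 := by positivity
    have h2 : (0:ℝ) < (k:ℝ) + 2 := by positivity
    have key : 1 / ((k:ℝ) + 2) ^ 2 ≤ 1 / ((k:ℝ) + 1) - 1 / ((k:ℝ) + 2) := by
      rw [div_sub_div _ _ (ne_of_gt h1) (ne_of_gt h2)]
      rw [div_le_div_iff₀ (by positivity) (by positivity)]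
      nlinarith
    have e : (k:ℝ) + 1 + 1 = (k:ℝ) + 2 := by ring
    push_cast
    rw [e]
    linarith

lemma H2_le (n : ℕ) : H n 2 ≤ 2 := by
  cases n with
  | zero => rw [H_zero]; norm_num
  | succ k =>
    have := H2_le' k
    have : (0:ℝ) < (k:ℝ) + 1 := by positivity
    have h2 := H2_le' k
    have h3 : (0:ℝ) < 1 / ((k:ℝ)+1) := by positivity
    linarith

lemma sqrt_sqrt_pow (x : ℝ) (hx : 0 ≤ x) :
    (Real.sqrt (Real.sqrt x)) ^ 4 = x := by
  have h := Real.sqrt_nonneg x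
  have h2 := Real.sqrt_nonneg (Real.sqrt x)
  calc (Real.sqrt (Real.sqrt x)) ^ 4 = ((Real.sqrt (Real.sqrt x)) ^ 2) ^ 2 := by ring
    _ = (Real.sqrt x) ^ 2 := by rw [Real.sq_sqrt h]
    _ = x := Real.sq_sqrt hx

lemma one_le_ssqrt {x : ℝ} (hx : 1 ≤ x) : 1 ≤ Real.sqrt (Real.sqrt x) := by
  have : (1:ℝ) ≤ Real.sqrt x := by
    rw [show (1:ℝ) = Real.sqrt 1 by simp]
    exact Real.sqrt_le_sqrt hx
  rw [show (1:ℝ) = Real.sqrt 1 by simp]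
  exact Real.sqrt_le_sqrt this

lemma H1_bound (n : ℕ) : H n 1 ≤ 7 * Real.sqrt (Real.sqrt ((n : ℝ) + 1)) := by
  induction n with
  | zero =>
    rw [H_zero]
    positivity
  | succ k ih =>
    have hc : ((k + 1 : ℕ):ℝ) + 1 = (k:ℝ) + 1 + 1 := by push_cast; ring
    rw [hc, H_succ]
    rcases Nat.eq_zero_or_pos k with hk | hk
    · subst hk
      have h1 : (1:ℝ) ≤ Real.sqrt (Real.sqrt 2) := one_le_ssqrt (by norm_num)
      simp only [H_zero, Nat.cast_zero, pow_one]
      norm_num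
      linarith
    · set y := Real.sqrt (Real.sqrt ((k:ℝ) + 1)) with hy
      set x := Real.sqrt (Real.sqrt ((k:ℝ) + 1 + 1)) with hx
      have hy4 : y ^ 4 = (k:ℝ) + 1 := sqrt_sqrt_pow _ (by positivity)
      have hx4 : x ^ 4 = (k:ℝ) + 2 := by
        rw [hx, show (k:ℝ)+1+1 = (k:ℝ)+2 by ring]
        exact sqrt_sqrt_pow _ (by positivity)
      have hy1 : 1 ≤ y := one_le_ssqrt (by push_cast; linarith [Nat.cast_nonneg (α := ℝ) k])
      have hx1 : 1 ≤ x := one_le_ssqrt (by push_cast; linarith [Nat.cast_nonneg (α := ℝ) k])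
      have hyx : y ≤ x := by
        apply Real.sqrt_le_sqrt; apply Real.sqrt_le_sqrt; linarith
      have hpos : (0:ℝ) < (k:ℝ) + 1 := by positivity
      have hk1 : (1:ℝ) ≤ (k:ℝ) := by exact_mod_cast hk
      have hx0 : (0:ℝ) < x := lt_of_lt_of_le one_pos hx1
      have hy0 : (0:ℝ) < y := lt_of_lt_of_le one_pos hy1
      have t1 : x^2*y ≤ x^3 := by nlinarith
      have t2 : x*y^2 ≤ x^3 := by nlinarith
      have t3 : y^3 ≤ x^3 := by nlinarith
      have t4 : x^3 ≤ x^4 := by nlinarith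
      have hS : x^3+x^2*y+x*y^2+y^3 ≤ 7*((k:ℝ)+1) := by nlinarith
      have key : 1 / ((k:ℝ) + 1) ≤ 7 * (x - y) := by
        rw [div_le_iff₀ hpos]
        have h1' : (1:ℝ) = (x-y)*(x^3+x^2*y+x*y^2+y^3) := by nlinarith
        calc (1:ℝ) = (x-y)*(x^3+x^2*y+x*y^2+y^3) := h1'
          _ ≤ (x-y)*(7*((k:ℝ)+1)) := by
              apply mul_le_mul_of_nonneg_left hS (sub_nonneg.2 hyx)
          _ = 7 * (x - y) * ((k:ℝ) + 1) := by ring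
      rw [pow_one]
      calc H k 1 + 1 / ((k:ℝ) + 1) ≤ 7 * y + 7 * (x - y) := add_le_add ih key
        _ = 7 * x := by ring

lemma H_sq_ge (n : ℕ) : H n 2 ≤ H n 1 ^ 2 := by
  induction n with
  | zero => simp [H_zero]
  | succ k ih =>
    rw [H_succ, H_succ]
    have h0 := H_nonneg k 1
    have h1 : (0:ℝ) < (k:ℝ) + 1 := by positivity
    have h2 : 1/((k:ℝ)+1)^2 = (1/((k:ℝ)+1)^1)^2 := by
      rw [pow_one, div_pow, one_pow]
    rw [h2]
    nlinarith [mul_nonneg h0 (by positivity : (0:ℝ) ≤ 1/((k:ℝ)+1)^1)]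


lemma summable_base2 : Summable (fun m : ℕ => 1 / ((m:ℝ) + 1) ^ 2) := by
  have h := (Real.summable_one_div_nat_pow (p := 2)).mpr (by norm_num)
  have h2 := (summable_nat_add_iff (f := fun n : ℕ => 1 / (n:ℝ) ^ 2) 1).mpr h
  apply h2.congr
  intro m
  push_cast
  ring

lemma summable_sqrt_div : Summable (fun m : ℕ => Real.sqrt ((m:ℝ) + 1) / ((m:ℝ) + 1) ^ 2) := by
  have h := Real.summable_one_div_nat_rpow.mpr (show (1:ℝ) < 3/2 by norm_num)
  have h2 := (summable_nat_add_iff (f := fun n : ℕ => 1 / (n:ℝ) ^ (3/2 : ℝ)) 1).mpr h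
  apply h2.congr
  intro m
  have hx : (0:ℝ) < (m:ℝ) + 1 := by positivity
  have key : ((m:ℝ) + 1) ^ (3/2 : ℝ) = ((m:ℝ) + 1) ^ 2 / Real.sqrt ((m:ℝ) + 1) := by
    rw [Real.sqrt_eq_rpow, show ((3:ℝ)/2) = 2 - 1/2 by norm_num,
      Real.rpow_sub hx, Real.rpow_two]
  push_cast
  rw [key]
  rw [one_div_div]

lemma H_diff_le (m : ℕ) : ∀ K : ℕ, H (K + m + 1) 1 - H K 1 ≤ ((m:ℝ) + 1) / ((K:ℝ) + 1) := by
  induction m with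
  | zero =>
    intro K
    rw [show K + 0 + 1 = K + 1 by ring, H_succ, pow_one]
    push_cast
    norm_num
  | succ m ih =>
    intro K
    have h1 : K + (m + 1) + 1 = (K + m + 1) + 1 := by ring
    rw [h1, H_succ, pow_one]
    have h2 : 1 / (((K + m + 1 : ℕ):ℝ) + 1) ≤ 1 / ((K:ℝ) + 1) := by
      apply div_le_div_of_nonneg_left one_pos.le (by positivity)
      push_cast
      linarith [Nat.cast_nonneg (α := ℝ) m]
    have := ih K
    have h3 : ((m:ℝ)+1+1)/((K:ℝ)+1) = ((m:ℝ)+1)/((K:ℝ)+1) + 1/((K:ℝ)+1) := by ring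
    push_cast at h2 ⊢
    linarith

lemma tele_partial (m : ℕ) : ∀ K : ℕ,
    ∑ n ∈ Finset.range K, (1:ℝ) / (((n:ℝ) + 1) * ((n:ℝ) + (m:ℝ) + 2))
      = (H (m+1) 1 + H K 1 - H (K + m + 1) 1) / ((m:ℝ) + 1) := by
  intro K
  induction K with
  | zero =>
    rw [Finset.sum_range_zero, H_zero, show 0 + m + 1 = m + 1 by ring]
    simp
  | succ K ih =>
    rw [Finset.sum_range_succ, ih, H_succ K 1,
      show K + 1 + m + 1 = (K + m + 1) + 1 by ring, H_succ (K + m + 1) 1]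
    have c1 : (0:ℝ) < (K:ℝ) + 1 := by positivity
    have c2 : (0:ℝ) < (K:ℝ) + (m:ℝ) + 2 := by positivity
    have c3 : (0:ℝ) < (m:ℝ) + 1 := by positivity
    have hc : ((K + m + 1 : ℕ):ℝ) + 1 = (K:ℝ) + (m:ℝ) + 2 := by push_cast; ring
    rw [pow_one, pow_one, hc]
    field_simp
    ring

lemma tele_hasSum (m : ℕ) :
    HasSum (fun n : ℕ => (1:ℝ) / (((n:ℝ) + 1) * ((n:ℝ) + (m:ℝ) + 2)))
      (H (m+1) 1 / ((m:ℝ) + 1)) := by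
  rw [hasSum_iff_tendsto_nat_of_nonneg (fun n => by positivity)]
  apply Filter.Tendsto.congr (fun K => (tele_partial m K).symm)
  have h0 : Filter.Tendsto (fun K : ℕ => H K 1 - H (K + m + 1) 1) Filter.atTop (nhds 0) := by
    have hup : ∀ K : ℕ, H K 1 - H (K + m + 1) 1 ≤ 0 := by
      intro K
      have := H_mono (show K ≤ K + m + 1 by omega) 1
      linarith
    have hlo : ∀ K : ℕ, -(((m:ℝ) + 1) * (1 / ((K:ℝ) + 1))) ≤ H K 1 - H (K + m + 1) 1 := by
      intro K
      have := H_diff_le m K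
      rw [mul_one_div]
      linarith
    have hT : Filter.Tendsto (fun K : ℕ => -(((m:ℝ) + 1) * (1 / ((K:ℝ) + 1)))) Filter.atTop (nhds 0) := by
      rw [show (0:ℝ) = -(((m:ℝ)+1) * 0) by ring]
      exact (tendsto_one_div_add_atTop_nhds_zero_nat.const_mul _).neg
    exact tendsto_of_tendsto_of_tendsto_of_le_of_le hT tendsto_const_nhds hlo hup
  have := ((tendsto_const_nhds (x := H (m+1) 1) (f := Filter.atTop (α := ℕ))).add h0).div_const ((m:ℝ) + 1)
  simp only [add_zero] at this
  apply this.congr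
  intro K
  ring


-- FIa
lemma FIa (n : ℕ) : ∑ i ∈ Finset.range n, H i 1 / ((i:ℝ) + 1) = (H n 1 ^ 2 - H n 2) / 2 := by
  induction n with
  | zero => simp [H_zero]
  | succ k ih =>
    rw [Finset.sum_range_succ, ih, H_succ k 1, H_succ k 2, pow_one]
    have h1 : ((k:ℝ) + 1) ≠ 0 := by positivity
    field_simp
    ring

-- reflected sum of reciprocals
lemma reflect_inv (k : ℕ) :
    ∑ i ∈ Finset.range (k+1), (1:ℝ) / ((k:ℝ) + 1 - (i:ℝ)) = H (k+1) 1 := by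
  rw [H_one_eq]
  rw [← Finset.sum_range_reflect (fun j => (1:ℝ) / ((j:ℝ) + 1)) (k+1)]
  apply Finset.sum_congr rfl
  intro i hi
  rw [Finset.mem_range] at hi
  have hik : i ≤ k := by omega
  have : ((k + 1 - 1 - i : ℕ):ℝ) = (k:ℝ) - (i:ℝ) := by
    rw [show k + 1 - 1 - i = k - i by omega]
    push_cast [Nat.cast_sub hik]
    ring
  rw [this]
  ring_nf

-- reflected sum with H weights
lemma reflect_H (k : ℕ) :
    ∑ i ∈ Finset.range (k+1), H i 1 / ((k:ℝ) + 1 - (i:ℝ))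
      = ∑ j ∈ Finset.range (k+1), H (k - j) 1 / ((j:ℝ) + 1) := by
  rw [← Finset.sum_range_reflect (fun j => H (k - j) 1 / ((j:ℝ) + 1)) (k+1)]
  apply Finset.sum_congr rfl
  intro i hi
  rw [Finset.mem_range] at hi
  have hik : i ≤ k := by omega
  have h1 : k + 1 - 1 - i = k - i := by omega
  have h2 : k - (k - i) = i := by omega
  rw [h1, h2]
  have : ((k - i : ℕ):ℝ) = (k:ℝ) - (i:ℝ) := by
    push_cast [Nat.cast_sub hik]; ring
  rw [this]
  ring_nf

-- triangle sum swap
lemma tri (f : ℕ → ℕ → ℝ) : ∀ n : ℕ,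
    ∑ j ∈ Finset.range n, ∑ t ∈ Finset.range (n - j), f j t
      = ∑ c ∈ Finset.range n, ∑ j ∈ Finset.range (c+1), f j (c - j) := by
  intro n
  induction n with
  | zero => simp
  | succ n ih =>
    have h1 : ∀ j ∈ Finset.range (n+1),
        ∑ t ∈ Finset.range (n + 1 - j), f j t
          = ∑ t ∈ Finset.range (n - j), f j t + f j (n - j) := by
      intro j hj
      rw [Finset.mem_range] at hj
      rw [show n + 1 - j = (n - j) + 1 by omega, Finset.sum_range_succ]
    rw [Finset.sum_congr rfl h1, Finset.sum_add_distrib,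
      Finset.sum_range_succ (fun j => ∑ t ∈ Finset.range (n - j), f j t)]
    simp only [Nat.sub_self, Finset.range_zero, Finset.sum_empty, add_zero]
    rw [ih, Finset.sum_range_succ (fun c => ∑ j ∈ Finset.range (c+1), f j (c - j)),
      Finset.sum_range_succ (fun j => f j (n - j))]

-- pointwise partial fraction  1/((i+1)(k+1-i)) = (1/(k+2)) (1/(i+1) + 1/(k+1-i))
lemma pf2 {i k : ℕ} (hik : i ≤ k) :
    (1:ℝ) / (((i:ℝ)+1) * ((k:ℝ)+1-(i:ℝ)))
      = (1/((k:ℝ)+2)) * (1/((i:ℝ)+1) + 1/((k:ℝ)+1-(i:ℝ))) := by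
  have h1 : (0:ℝ) < (i:ℝ) + 1 := by positivity
  have h2 : (0:ℝ) < (k:ℝ) + 1 - (i:ℝ) := by
    have : (i:ℝ) ≤ (k:ℝ) := by exact_mod_cast hik
    linarith
  have h3 : (0:ℝ) < (k:ℝ) + 2 := by positivity
  field_simp
  ring

lemma row (c : ℕ) :
    ∑ j ∈ Finset.range (c+1), (1:ℝ) / (((j:ℝ)+1) * ((c:ℝ)+1-(j:ℝ)))
      = 2 * H (c+1) 1 / ((c:ℝ)+2) := by
  have h1 : ∀ j ∈ Finset.range (c+1),
      (1:ℝ) / (((j:ℝ)+1) * ((c:ℝ)+1-(j:ℝ)))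
        = (1/((c:ℝ)+2)) * (1/((j:ℝ)+1) + 1/((c:ℝ)+1-(j:ℝ))) := by
    intro j hj
    rw [Finset.mem_range] at hj
    exact pf2 (by omega)
  rw [Finset.sum_congr rfl h1, ← Finset.mul_sum, Finset.sum_add_distrib, reflect_inv c,
    ← H_one_eq (c+1)]
  ring


lemma Sa_shift (k : ℕ) :
    ∑ i ∈ Finset.range (k+1), H i 1 / ((i:ℝ)+1)
      = ∑ i ∈ Finset.range k, H (i+1) 1 / ((i:ℝ)+2) := by
  rw [Finset.sum_range_succ' (fun i => H i 1 / ((i:ℝ)+1)) k]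
  rw [H_zero]
  simp only [zero_div, add_zero]
  apply Finset.sum_congr rfl
  intro i _
  push_cast
  ring_nf

lemma Sb_eq (k : ℕ) :
    ∑ i ∈ Finset.range (k+1), H i 1 / ((k:ℝ)+1-(i:ℝ))
      = 2 * ∑ i ∈ Finset.range k, H (i+1) 1 / ((i:ℝ)+2) := by
  rw [reflect_H k]
  have h1 : ∀ j ∈ Finset.range (k+1),
      H (k - j) 1 / ((j:ℝ)+1)
        = ∑ t ∈ Finset.range (k - j), (1:ℝ)/((j:ℝ)+1) * (1/((t:ℝ)+1)) := by
    intro j _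
    rw [H_one_eq, Finset.sum_div]
    apply Finset.sum_congr rfl
    intro t _
    ring
  rw [Finset.sum_congr rfl h1,
    Finset.sum_range_succ (fun j => ∑ t ∈ Finset.range (k - j), (1:ℝ)/((j:ℝ)+1) * (1/((t:ℝ)+1)))]
  simp only [Nat.sub_self, Finset.range_zero, Finset.sum_empty, add_zero]
  rw [tri (fun j t => (1:ℝ)/((j:ℝ)+1) * (1/((t:ℝ)+1))) k]
  rw [Finset.mul_sum]
  apply Finset.sum_congr rfl
  intro c hc
  have h2 : ∀ j ∈ Finset.range (c+1),
      (1:ℝ)/((j:ℝ)+1) * (1/(((c - j : ℕ):ℝ)+1))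
        = (1:ℝ) / (((j:ℝ)+1) * ((c:ℝ)+1-(j:ℝ))) := by
    intro j hj
    rw [Finset.mem_range] at hj
    have hjc : j ≤ c := by omega
    have : ((c - j : ℕ):ℝ) = (c:ℝ) - (j:ℝ) := by push_cast [Nat.cast_sub hjc]; ring
    rw [this, div_mul_div_comm, one_mul]
    ring_nf
  rw [Finset.sum_congr rfl h2, row c]
  ring


noncomputable def fU : ℕ × ℕ → ℝ :=
  fun p => H p.1 1 / (((p.1:ℝ)+1) * ((p.2:ℝ)+1) * ((p.1:ℝ)+(p.2:ℝ)+2))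

noncomputable def fX : ℕ × ℕ → ℝ :=
  fun p => 1 / (((p.1:ℝ)+1)^2 * (((p.2:ℝ)+1) * ((p.1:ℝ)+(p.2:ℝ)+2)))

lemma antidiag_U (k : ℕ) :
    ∑ ij ∈ Finset.HasAntidiagonal.antidiagonal k, fU ij
      = (3/2) * ((H (k+1) 1 ^ 2 - H (k+1) 2) / ((k:ℝ)+2)^2) := by
  rw [Finset.Nat.sum_antidiagonal_eq_sum_range_succ_mk]
  have h1 : ∀ i ∈ Finset.range (k+1),
      fU (i, k - i)
        = (1/((k:ℝ)+2)^2) * (H i 1/((i:ℝ)+1) + H i 1/((k:ℝ)+1-(i:ℝ))) := by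
    intro i hi
    rw [Finset.mem_range] at hi
    have hik : i ≤ k := by omega
    have hc : ((k - i : ℕ):ℝ) = (k:ℝ) - (i:ℝ) := by push_cast [Nat.cast_sub hik]; ring
    show H i 1 / (((i:ℝ)+1) * (((k - i:ℕ):ℝ)+1) * ((i:ℝ)+((k - i:ℕ):ℝ)+2)) = _
    rw [hc]
    have d1 : (0:ℝ) < (i:ℝ) + 1 := by positivity
    have d2 : (0:ℝ) < (k:ℝ) - (i:ℝ) + 1 := by
      have : (i:ℝ) ≤ (k:ℝ) := by exact_mod_cast hik
      linarith
    have d3 : (0:ℝ) < (k:ℝ) + 2 := by positivity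
    have e1 : (i:ℝ) + ((k:ℝ) - (i:ℝ)) + 2 = (k:ℝ) + 2 := by ring
    rw [e1]
    have d2' : (k:ℝ) + 1 - (i:ℝ) ≠ 0 := by intro hz; rw [show (k:ℝ)+1-(i:ℝ) = ((k:ℝ)-(i:ℝ)+1) by ring] at hz; linarith
    field_simp
    ring
  rw [Finset.sum_congr rfl h1, ← Finset.mul_sum, Finset.sum_add_distrib, Sa_shift k, Sb_eq k,
    ← Sa_shift k, FIa (k+1)]
  ring

lemma antidiag_X (k : ℕ) :
    ∑ ij ∈ Finset.HasAntidiagonal.antidiagonal k, fX ij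
      = H (k+1) 2/((k:ℝ)+2)^2 + 2 * H (k+1) 1/((k:ℝ)+2)^3 := by
  rw [Finset.Nat.sum_antidiagonal_eq_sum_range_succ_mk]
  have h1 : ∀ i ∈ Finset.range (k+1),
      fX (i, k - i)
        = (1/((k:ℝ)+2)^2) * (1/((i:ℝ)+1)^2)
          + ((1/((k:ℝ)+2)^3) * (1/((i:ℝ)+1)) + (1/((k:ℝ)+2)^3) * (1/((k:ℝ)+1-(i:ℝ)))) := by
    intro i hi
    rw [Finset.mem_range] at hi
    have hik : i ≤ k := by omega
    have hc : ((k - i : ℕ):ℝ) = (k:ℝ) - (i:ℝ) := by push_cast [Nat.cast_sub hik]; ring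
    show (1:ℝ) / (((i:ℝ)+1)^2 * ((((k - i:ℕ):ℝ)+1) * ((i:ℝ)+((k - i:ℕ):ℝ)+2))) = _
    rw [hc]
    have d1 : (0:ℝ) < (i:ℝ) + 1 := by positivity
    have d2 : (0:ℝ) < (k:ℝ) - (i:ℝ) + 1 := by
      have : (i:ℝ) ≤ (k:ℝ) := by exact_mod_cast hik
      linarith
    have d3 : (0:ℝ) < (k:ℝ) + 2 := by positivity
    have e1 : (i:ℝ) + ((k:ℝ) - (i:ℝ)) + 2 = (k:ℝ) + 2 := by ring
    rw [e1]
    have d2' : (k:ℝ) + 1 - (i:ℝ) ≠ 0 := by intro hz; rw [show (k:ℝ)+1-(i:ℝ) = ((k:ℝ)-(i:ℝ)+1) by ring] at hz; linarith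
    field_simp
    ring
  rw [Finset.sum_congr rfl h1, Finset.sum_add_distrib, Finset.sum_add_distrib,
    ← Finset.mul_sum, ← Finset.mul_sum, ← Finset.mul_sum, reflect_inv k,
    ← H_one_eq (k+1), ← H_two_eq (k+1)]
  ring


noncomputable def sseq (m : ℕ) : ℝ := H m 1 * H (m+1) 1 / ((m:ℝ)+1)^2
noncomputable def wseq (m : ℕ) : ℝ := (H m 1 ^ 2 - H m 2) / ((m:ℝ)+1)^2
noncomputable def aseq (m : ℕ) : ℝ := H m 2 / ((m:ℝ)+1)^2
noncomputable def bseq (m : ℕ) : ℝ := H m 1 / ((m:ℝ)+1)^3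
noncomputable def zseq (m : ℕ) : ℝ := 1 / ((m:ℝ)+1)^4
noncomputable def xseq (m : ℕ) : ℝ := H (m+1) 1 / ((m:ℝ)+1)^3

-- generic antidiagonal regrouping
lemma tsum_prod_antidiag {F : ℕ × ℕ → ℝ} (hF : Summable F) :
    ∑' p : ℕ × ℕ, F p = ∑' k : ℕ, ∑ ij ∈ Finset.HasAntidiagonal.antidiagonal k, F ij := by
  have hsig : Summable fun x : Σ n : ℕ, Finset.HasAntidiagonal.antidiagonal n =>
      F (Finset.HasAntidiagonal.sigmaAntidiagonalEquivProd x) :=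
    Finset.HasAntidiagonal.sigmaAntidiagonalEquivProd.summable_iff.mpr hF
  rw [← Finset.HasAntidiagonal.sigmaAntidiagonalEquivProd.tsum_eq F]
  rw [Summable.tsum_sigma' (fun n => (hasSum_fintype _).summable) hsig]
  apply tsum_congr
  intro n
  exact Finset.tsum_subtype (Finset.HasAntidiagonal.antidiagonal n) F

lemma sqrt_bd (m : ℕ) : H m 1 * H (m+1) 1 ≤ 98 * Real.sqrt ((m:ℝ)+1) := by
  have h1 := H1_bound m
  have h2 := H1_bound (m+1)
  have hc : ((m+1:ℕ):ℝ) + 1 = (m:ℝ) + 2 := by push_cast; ring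
  rw [hc] at h2
  have hm1 : Real.sqrt (Real.sqrt ((m:ℝ)+1)) ≤ Real.sqrt (Real.sqrt ((m:ℝ)+2)) := by
    apply Real.sqrt_le_sqrt; apply Real.sqrt_le_sqrt; linarith
  have hnn : (0:ℝ) ≤ Real.sqrt (Real.sqrt ((m:ℝ)+2)) := Real.sqrt_nonneg _
  have hsq : Real.sqrt (Real.sqrt ((m:ℝ)+2)) * Real.sqrt (Real.sqrt ((m:ℝ)+2))
      = Real.sqrt ((m:ℝ)+2) := Real.mul_self_sqrt (Real.sqrt_nonneg _)
  have h4 : Real.sqrt ((m:ℝ)+2) ≤ 2 * Real.sqrt ((m:ℝ)+1) := by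
    have : Real.sqrt ((m:ℝ)+2) ≤ Real.sqrt (4*((m:ℝ)+1)) := by
      apply Real.sqrt_le_sqrt; linarith [Nat.cast_nonneg (α := ℝ) m]
    have h5 : Real.sqrt (4*((m:ℝ)+1)) = 2 * Real.sqrt ((m:ℝ)+1) := by
      rw [show (4:ℝ)*((m:ℝ)+1) = (2*Real.sqrt ((m:ℝ)+1))^2 by
        rw [mul_pow, Real.sq_sqrt (by positivity)]; ring]
      rw [Real.sqrt_sq (by positivity)]
    linarith
  have hH1 : 0 ≤ H m 1 := H_nonneg m 1
  calc H m 1 * H (m+1) 1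
      ≤ (7 * Real.sqrt (Real.sqrt ((m:ℝ)+2))) * (7 * Real.sqrt (Real.sqrt ((m:ℝ)+2))) := by
        apply mul_le_mul (le_trans h1 (by linarith)) h2 (H_nonneg (m+1) 1) (by positivity)
    _ = 49 * Real.sqrt ((m:ℝ)+2) := by rw [show (7 * Real.sqrt (Real.sqrt ((m:ℝ)+2))) * (7 * Real.sqrt (Real.sqrt ((m:ℝ)+2))) = 49 * (Real.sqrt (Real.sqrt ((m:ℝ)+2)) * Real.sqrt (Real.sqrt ((m:ℝ)+2))) by ring, hsq]
    _ ≤ 98 * Real.sqrt ((m:ℝ)+1) := by linarith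

lemma summable_s : Summable sseq := by
  apply Summable.of_nonneg_of_le
    (fun m => by
      unfold sseq
      have := H_nonneg m 1; have := H_nonneg (m+1) 1
      positivity)
    (fun m => ?_) (summable_sqrt_div.mul_left 98)
  unfold sseq
  rw [div_le_iff₀ (by positivity)]
  have hr : 98 * (Real.sqrt ((m:ℝ)+1) / ((m:ℝ)+1)^2) * ((m:ℝ)+1)^2 = 98 * Real.sqrt ((m:ℝ)+1) := by
    field_simp
  rw [hr]
  exact sqrt_bd m

lemma w_nonneg (m : ℕ) : 0 ≤ wseq m := by
  unfold wseq
  have := H_sq_ge m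
  apply div_nonneg (by linarith) (by positivity)

lemma w_le_s (m : ℕ) : wseq m ≤ sseq m := by
  unfold wseq sseq
  have hkey : H m 1 ^ 2 - H m 2 ≤ H m 1 * H (m+1) 1 := by
    nlinarith [H_nonneg m 2, H_nonneg m 1, H_mono (Nat.le_succ m) 1]
  gcongr

lemma summable_w : Summable wseq :=
  Summable.of_nonneg_of_le w_nonneg w_le_s summable_s

lemma summable_a : Summable aseq := by
  apply Summable.of_nonneg_of_le
    (fun m => by unfold aseq; have := H_nonneg m 2; positivity)
    (fun m => ?_) (summable_base2.mul_left 2)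
  unfold aseq
  rw [div_le_iff₀ (by positivity)]
  have hr : 2 * (1/((m:ℝ)+1)^2) * ((m:ℝ)+1)^2 = 2 := by field_simp
  rw [hr]
  exact H2_le m

lemma summable_b : Summable bseq := by
  apply Summable.of_nonneg_of_le
    (fun m => by unfold bseq; have := H_nonneg m 1; positivity)
    (fun m => ?_) summable_base2
  unfold bseq
  rw [div_le_div_iff₀ (by positivity) (by positivity)]
  have h2 : H m 1 ≤ (m:ℝ) + 1 := le_trans (H_le m) (by linarith)
  calc H m 1 * ((m:ℝ)+1)^2 ≤ ((m:ℝ)+1) * ((m:ℝ)+1)^2 := by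
        apply mul_le_mul_of_nonneg_right h2 (by positivity)
    _ = 1 * ((m:ℝ)+1)^3 := by ring
  
lemma summable_z : Summable zseq := by
  apply Summable.of_nonneg_of_le
    (fun m => by unfold zseq; positivity)
    (fun m => ?_) summable_base2
  unfold zseq
  have h1 : (1:ℝ) ≤ ((m:ℝ)+1) := by linarith [Nat.cast_nonneg (α := ℝ) m]
  rw [div_le_div_iff₀ (by positivity) (by positivity)]
  have h2 : ((m:ℝ)+1)^2 ≤ ((m:ℝ)+1)^4 := pow_le_pow_right₀ h1 (by norm_num)
  linarith

lemma x_eq (m : ℕ) : xseq m = bseq m + zseq m := by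
  unfold xseq bseq zseq
  rw [H_succ, pow_one]
  have h1 : ((m:ℝ)+1) ≠ 0 := by positivity
  field_simp

lemma summable_x : Summable xseq :=
  (summable_b.add summable_z).congr (fun m => (x_eq m).symm)

lemma s_eq (m : ℕ) : sseq m = wseq m + aseq m + bseq m := by
  unfold sseq wseq aseq bseq
  rw [H_succ, pow_one]
  have h1 : ((m:ℝ)+1) ≠ 0 := by positivity
  field_simp
  ring

-- inner sums
lemma fU_inner_rw (m : ℕ) : ∀ n : ℕ, fU (m, n)
    = (H m 1 / ((m:ℝ)+1)) * (1 / (((n:ℝ) + 1) * ((n:ℝ) + (m:ℝ) + 2))) := by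
  intro n
  show H m 1 / (((m:ℝ)+1) * (((n:ℝ))+1) * ((m:ℝ)+(n:ℝ)+2)) = _
  have d1 : ((m:ℝ)+1) ≠ 0 := by positivity
  have d2 : ((n:ℝ)+1) ≠ 0 := by positivity
  have d3 : ((m:ℝ)+(n:ℝ)+2) ≠ 0 := by positivity
  have d4 : ((n:ℝ)+(m:ℝ)+2) ≠ 0 := by positivity
  field_simp
  ring

lemma fU_inner_summable (m : ℕ) : Summable (fun n => fU (m, n)) :=
  (((tele_hasSum m).summable).mul_left _).congr (fun n => (fU_inner_rw m n).symm)

lemma fU_inner_tsum (m : ℕ) : ∑' n, fU (m, n) = sseq m := by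
  rw [tsum_congr (fU_inner_rw m), tsum_mul_left, (tele_hasSum m).tsum_eq]
  unfold sseq
  rw [div_mul_div_comm]
  ring_nf

lemma fX_inner_rw (m : ℕ) : ∀ n : ℕ, fX (m, n)
    = (1 / ((m:ℝ)+1)^2) * (1 / (((n:ℝ) + 1) * ((n:ℝ) + (m:ℝ) + 2))) := by
  intro n
  show (1:ℝ) / (((m:ℝ)+1)^2 * (((n:ℝ)+1) * ((m:ℝ)+(n:ℝ)+2))) = _
  rw [div_mul_div_comm, one_mul]
  ring_nf

lemma fX_inner_summable (m : ℕ) : Summable (fun n => fX (m, n)) :=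
  (((tele_hasSum m).summable).mul_left _).congr (fun n => (fX_inner_rw m n).symm)

lemma fX_inner_tsum (m : ℕ) : ∑' n, fX (m, n) = xseq m := by
  rw [tsum_congr (fX_inner_rw m), tsum_mul_left, (tele_hasSum m).tsum_eq]
  unfold xseq
  rw [div_mul_div_comm, one_mul]
  rw [show ((m:ℝ)+1)^2 * ((m:ℝ)+1) = ((m:ℝ)+1)^3 by ring]

lemma summable_fU : Summable fU := by
  apply (summable_prod_of_nonneg ?_).mpr
  constructor
  · exact fun m => fU_inner_summable m
  · exact summable_s.congr (fun m => (fU_inner_tsum m).symm)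
  · intro p
    show (0:ℝ) ≤ H p.1 1 / _
    have := H_nonneg p.1 1
    positivity

lemma summable_fX : Summable fX := by
  apply (summable_prod_of_nonneg ?_).mpr
  constructor
  · exact fun m => fX_inner_summable m
  · exact summable_x.congr (fun m => (fX_inner_tsum m).symm)
  · intro p
    show (0:ℝ) ≤ 1 / _
    positivity

lemma tsum_shift {f : ℕ → ℝ} (hf : Summable f) (h0 : f 0 = 0) :
    ∑' k : ℕ, f (k+1) = ∑' m, f m := by
  rw [Summable.tsum_eq_zero_add hf, h0, zero_add]

lemma X_eval1 : ∑' p : ℕ × ℕ, fX p = ∑' m, xseq m := by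
  rw [Summable.tsum_prod' summable_fX fX_inner_summable]
  exact tsum_congr fX_inner_tsum

lemma X_eval2 : ∑' p : ℕ × ℕ, fX p = (∑' m, aseq m) + 2 * ∑' m, bseq m := by
  rw [tsum_prod_antidiag summable_fX]
  have h1 : ∀ k : ℕ, ∑ ij ∈ Finset.HasAntidiagonal.antidiagonal k, fX ij
      = aseq (k+1) + 2 * bseq (k+1) := by
    intro k
    rw [antidiag_X k]
    unfold aseq bseq
    push_cast
    ring_nf
  rw [tsum_congr h1]
  have ha : Summable (fun k : ℕ => aseq (k+1)) := (summable_nat_add_iff 1).mpr summable_a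
  have hb : Summable (fun k : ℕ => bseq (k+1)) := (summable_nat_add_iff 1).mpr summable_b
  rw [Summable.tsum_add ha (hb.mul_left 2), tsum_mul_left,
    tsum_shift summable_a (by unfold aseq; rw [H_zero]; simp),
    tsum_shift summable_b (by unfold bseq; rw [H_zero]; simp)]

lemma U_eval1 : ∑' p : ℕ × ℕ, fU p = ∑' m, sseq m := by
  rw [Summable.tsum_prod' summable_fU fU_inner_summable]
  exact tsum_congr fU_inner_tsum

lemma U_eval2 : ∑' p : ℕ × ℕ, fU p = (3/2) * ∑' m, wseq m := by
  rw [tsum_prod_antidiag summable_fU]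
  have h1 : ∀ k : ℕ, ∑ ij ∈ Finset.HasAntidiagonal.antidiagonal k, fU ij = (3/2) * wseq (k+1) := by
    intro k
    rw [antidiag_U k]
    unfold wseq
    push_cast
    ring_nf
  rw [tsum_congr h1, tsum_mul_left,
    tsum_shift summable_w (by unfold wseq; rw [H_zero, H_zero]; simp)]

lemma S_split : ∑' m, sseq m = (∑' m, wseq m) + (∑' m, aseq m) + ∑' m, bseq m := by
  rw [tsum_congr s_eq, Summable.tsum_add (summable_w.add summable_a) summable_b,
    Summable.tsum_add summable_w summable_a]

lemma x_split : ∑' m, xseq m = (∑' m, bseq m) + ∑' m, zseq m := by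
  rw [tsum_congr x_eq, Summable.tsum_add summable_b summable_z]

lemma final_S : ∑' m, sseq m = 3 * ∑' m, zseq m := by
  have e1 : (∑' m, aseq m) + 2 * ∑' m, bseq m = (∑' m, bseq m) + ∑' m, zseq m := by
    rw [← x_split, ← X_eval1, X_eval2]
  have e2 : ∑' m, sseq m = (3/2) * ∑' m, wseq m := by rw [← U_eval1, U_eval2]
  have e3 := S_split
  have e4 : (∑' m, aseq m) + (∑' m, bseq m) = ∑' m, zseq m := by linarith
  linarith



theorem stmt16 :
    ∑' n : ℕ, H (n + 1) 1 * H (n + 2) 1 / ((n : ℝ) + 2) ^ 2 = 3 * Z 4 := by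
  have hZ : Z 4 = ∑' m, zseq m := by
    unfold Z zseq
    norm_num
  have h1 : ∀ n : ℕ, sseq (n+1) = H (n + 1) 1 * H (n + 2) 1 / ((n : ℝ) + 2) ^ 2 := by
    intro n
    unfold sseq
    have : n + 1 + 1 = n + 2 := by ring
    rw [this]
    push_cast
    ring_nf
  calc ∑' n : ℕ, H (n + 1) 1 * H (n + 2) 1 / ((n : ℝ) + 2) ^ 2
      = ∑' n : ℕ, sseq (n+1) := tsum_congr (fun n => (h1 n).symm)
    _ = ∑' m, sseq m := tsum_shift summable_s (by unfold sseq; rw [H_zero]; simp)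
    _ = 3 * ∑' m, zseq m := final_S
    _ = 3 * Z 4 := by rw [hZ]
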